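/- For l = 1,…,L let {x_i^{A,l}} be an orthonormal basis of ℂ^{d_A} and {x_j^{B,l}} an orthonormal basis of ℂ^{d_B}. Suppose ω is a vector with nonnegative entries summing to L such that for every density matrix σ_A on ℂ^{d_A}, the direct sum ⊕_{l=1}^L p(x^{A,l}|σ_A) of the measurement distributions is majorized by ω. Then for every separable density matrix ρ on ℂ^{d_A} ⊗ ℂ^{d_B}, the direct sum ⊕_{l=1}^L p^{(l)} of the joint measurement distributions p^{(l)} of ρ in the bases {x_i^{A,l} ⊗ x_j^{B,l}} is majorized by ω. -/

import Mathlib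

open Matrix
open scoped Kronecker ComplexOrder

noncomputable section

/-- Sum of the `k` largest entries of `v` (zero-padding implicit for nonneg vectors):
the maximum of `∑ i ∈ s, v i` over subsets `s` of cardinality at most `k`. -/
def topSum {ι : Type*} [Fintype ι] (v : ι → ℝ) (k : ℕ) : ℝ :=
  (Finset.univ.powerset.filter fun s => s.card ≤ k).sup' ⟨∅, by simp⟩ fun s => ∑ i ∈ s, v i

/-- `v ≺ w` (majorization, with implicit zero padding): every partial sum of the `k` largest
entries of `v` is at most that of `w`, and the total sums are equal. -/
def Majorizes {ι κ : Type*} [Fintype ι] [Fintype κ] (v : ι → ℝ) (w : κ → ℝ) : Prop :=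
  (∀ k : ℕ, topSum v k ≤ topSum w k) ∧ (∑ i, v i = ∑ j, w j)

/-- The operator norm (largest singular value) of a complex matrix. -/
def opNorm {m n : Type*} [Fintype m] [Fintype n] [DecidableEq n] (M : Matrix m n ℂ) : ℝ :=
  ‖LinearMap.toContinuousLinearMap (Matrix.toEuclideanLin M)‖

/-- `sCoef U k = s_k`: the maximum operator norm over all submatrices of `U` of class `k`,
i.e. obtained by selecting nonempty row/column sets `R`, `C` with `|R| + |C| = k + 1`. -/
def sCoef {d : ℕ} (U : Matrix (Fin d) (Fin d) ℂ) (k : ℕ) : ℝ :=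
  sSup { r : ℝ | ∃ R C : Finset (Fin d), R.Nonempty ∧ C.Nonempty ∧ R.card + C.card = k + 1 ∧
    r = opNorm (U.submatrix (fun i : {i // i ∈ R} => (i : Fin d))
                            (fun j : {j // j ∈ C} => (j : Fin d))) }

/-- The bound vector `ω^{X⊕Z} = (1, s_1, s_2 - s_1, …, s_d - s_{d-1}, 0, …, 0) ∈ ℝ^{2d}`.
(Note `sCoef U 0 = sSup ∅ = 0`, so the entry at index `1` is `s_1`.) -/
def omegaDS {d : ℕ} (U : Matrix (Fin d) (Fin d) ℂ) : Fin (2 * d) → ℝ := fun i =>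
  if (i : ℕ) = 0 then 1
  else if (i : ℕ) ≤ d then sCoef U (i : ℕ) - sCoef U ((i : ℕ) - 1)
  else 0

/-- A density matrix: positive semidefinite with unit trace. -/
def IsDensityMatrix {n : Type*} [Fintype n] (ρ : Matrix n n ℂ) : Prop :=
  ρ.PosSemidef ∧ ρ.trace = 1

/-- A family of vectors forming an orthonormal basis of `ℂ^d` (w.r.t. `⟨u, v⟩ = star u ⬝ᵥ v`). -/
def OrthonormalBasisVecs {d : ℕ} (x : Fin d → Fin d → ℂ) : Prop :=
  ∀ i j, star (x i) ⬝ᵥ x j = if i = j then 1 else 0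

/-- Measurement distribution of a density matrix `ρ` in the basis `x`: `p i = ⟨x i, ρ (x i)⟩`. -/
def measDist {d : ℕ} (x : Fin d → Fin d → ℂ) (ρ : Matrix (Fin d) (Fin d) ℂ) : Fin d → ℝ :=
  fun i => (star (x i) ⬝ᵥ (ρ *ᵥ x i)).re

/-- The tensor product of vectors. -/
def tensorVec {dA dB : ℕ} (u : Fin dA → ℂ) (v : Fin dB → ℂ) : Fin dA × Fin dB → ℂ :=
  fun ab => u ab.1 * v ab.2

/-- Joint measurement distribution of a bipartite density matrix `ρ` in the product basis
`{xA i ⊗ xB j}`: `p (i,j) = ⟨xA i ⊗ xB j, ρ (xA i ⊗ xB j)⟩`. -/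
def jointDist {dA dB : ℕ} (xA : Fin dA → Fin dA → ℂ) (xB : Fin dB → Fin dB → ℂ)
    (ρ : Matrix (Fin dA × Fin dB) (Fin dA × Fin dB) ℂ) : Fin dA × Fin dB → ℝ :=
  fun ij => (star (tensorVec (xA ij.1) (xB ij.2)) ⬝ᵥ (ρ *ᵥ tensorVec (xA ij.1) (xB ij.2))).re

open scoped Classical in
/-- The finite set of distinct values of the products `α i * β j`. -/
def valueSet {dA dB : ℕ} (α : Fin dA → ℝ) (β : Fin dB → ℝ) : Finset ℝ :=
  Finset.image (fun ij : Fin dA × Fin dB => α ij.1 * β ij.2) Finset.univ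

open scoped Classical in
/-- The grouped distribution of a joint distribution `p`, indexed by the distinct values `l`
of the products `α i * β j`, with entries `∑_{(i,j) : α i * β j = l} p (i,j)`. -/
def groupedDist {dA dB : ℕ} (α : Fin dA → ℝ) (β : Fin dB → ℝ)
    (p : Fin dA × Fin dB → ℝ) : valueSet α β → ℝ :=
  fun l => ∑ ij ∈ Finset.univ.filter (fun ij : Fin dA × Fin dB => α ij.1 * β ij.2 = (l : ℝ)), p ij

/-- Separability: `ρ` is a finite convex combination of tensor products of density matrices. -/
def IsSeparableState {dA dB : ℕ} (ρ : Matrix (Fin dA × Fin dB) (Fin dA × Fin dB) ℂ) : Prop :=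
  ∃ (K : ℕ) (lam : Fin K → ℝ) (σ : Fin K → Matrix (Fin dA) (Fin dA) ℂ)
    (τ : Fin K → Matrix (Fin dB) (Fin dB) ℂ),
    (∀ k, 0 ≤ lam k) ∧ (∑ k, lam k = 1) ∧
    (∀ k, IsDensityMatrix (σ k)) ∧ (∀ k, IsDensityMatrix (τ k)) ∧
    ρ = ∑ k, (lam k : ℂ) • (σ k ⊗ₖ τ k)

/-! A product state `σ ⊗ τ` measured in the basis `x^{A,l} ⊗ x^{B,l}` has distribution
`p(i | σ, l) * p(j | τ, l)`. As `∑ j p(j | τ, l) = 1`, this vector only splits the entries of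
`⊕_l p(x^{A,l} | σ)`, which is majorized by `ω`, into nonnegative pieces, and such a refinement
is still majorized by `ω`. A separable state is a convex combination of product states, and the
vectors majorized by `ω` form a convex set since `topSum` is subadditive and positively
homogeneous. -/

section Majorization

variable {ι κ : Type*} [Fintype ι] [Fintype κ]

lemma sum_le_topSum (v : ι → ℝ) {k : ℕ} {s : Finset ι} (hs : s.card ≤ k) :
    ∑ i ∈ s, v i ≤ topSum v k :=
  Finset.le_sup' (fun t => ∑ i ∈ t, v i) (by simp [hs])

lemma topSum_le {v : ι → ℝ} {k : ℕ} {c : ℝ}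
    (h : ∀ s : Finset ι, s.card ≤ k → ∑ i ∈ s, v i ≤ c) : topSum v k ≤ c :=
  Finset.sup'_le _ _ fun s hs => h s (Finset.mem_filter.mp hs).2

lemma topSum_sum_smul_le {K : Type*} [Fintype K] {lam : K → ℝ} (hlam : ∀ k, 0 ≤ lam k)
    (v : K → ι → ℝ) (n : ℕ) :
    topSum (∑ k, lam k • v k) n ≤ ∑ k, lam k * topSum (v k) n :=
  topSum_le fun s hs => calc
    ∑ i ∈ s, (∑ k, lam k • v k) i = ∑ k, lam k * ∑ i ∈ s, v k i := by
      simp only [Finset.sum_apply, Pi.smul_apply, smul_eq_mul, Finset.mul_sum]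
      exact Finset.sum_comm
    _ ≤ ∑ k, lam k * topSum (v k) n :=
      Finset.sum_le_sum fun k _ => mul_le_mul_of_nonneg_left (sum_le_topSum _ hs) (hlam k)

lemma Majorizes.sum_smul {K : Type*} [Fintype K] {lam : K → ℝ} (hlam0 : ∀ k, 0 ≤ lam k)
    (hlam1 : ∑ k, lam k = 1) {v : K → ι → ℝ} {w : κ → ℝ} (h : ∀ k, Majorizes (v k) w) :
    Majorizes (∑ k, lam k • v k) w := by
  refine ⟨fun n => ?_, ?_⟩
  · calc topSum (∑ k, lam k • v k) n ≤ ∑ k, lam k * topSum (v k) n :=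
          topSum_sum_smul_le hlam0 v n
      _ ≤ ∑ k, lam k * topSum w n :=
          Finset.sum_le_sum fun k _ => mul_le_mul_of_nonneg_left ((h k).1 n) (hlam0 k)
      _ = topSum w n := by rw [← Finset.sum_mul, hlam1, one_mul]
  · calc ∑ i, (∑ k, lam k • v k) i = ∑ k, lam k * ∑ i, v k i := by
          simp only [Finset.sum_apply, Pi.smul_apply, smul_eq_mul, Finset.mul_sum]
          exact Finset.sum_comm
      _ = ∑ j, w j := by simp only [fun k => (h k).2, ← Finset.sum_mul, hlam1, one_mul]

/-- The pieces of any `k` entries of `v` lie in at most `k` fibres of `f`. -/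
lemma topSum_le_of_fiberwise_sum_eq [DecidableEq κ] {v : ι → ℝ} {u : κ → ℝ} (f : ι → κ)
    (hv : ∀ i, 0 ≤ v i) (hfib : ∀ y, ∑ i with f i = y, v i = u y) (k : ℕ) :
    topSum v k ≤ topSum u k :=
  topSum_le fun s hs => calc
    ∑ i ∈ s, v i = ∑ y ∈ s.image f, ∑ i ∈ s with f i = y, v i :=
      (Finset.sum_fiberwise_of_maps_to (fun _ => Finset.mem_image_of_mem f) _).symm
    _ ≤ ∑ y ∈ s.image f, u y := Finset.sum_le_sum fun y _ => hfib y ▸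
      Finset.sum_le_sum_of_subset_of_nonneg
        (Finset.filter_subset_filter _ (Finset.subset_univ s)) fun i _ _ => hv i
    _ ≤ topSum u k := sum_le_topSum u (Finset.card_image_le.trans hs)

lemma Majorizes.of_fiberwise_sum_eq [DecidableEq κ] {ν : Type*} [Fintype ν] {v : ι → ℝ}
    {u : κ → ℝ} {w : ν → ℝ} (huw : Majorizes u w) (f : ι → κ) (hv : ∀ i, 0 ≤ v i)
    (hfib : ∀ y, ∑ i with f i = y, v i = u y) : Majorizes v w :=
  ⟨fun k => (topSum_le_of_fiberwise_sum_eq f hv hfib k).trans (huw.1 k), by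
    rw [← Finset.sum_fiberwise Finset.univ f v, ← huw.2]
    exact Finset.sum_congr rfl fun y _ => hfib y⟩

lemma Majorizes.mul_of_sum_eq_one {α β ν : Type*} [Fintype α] [Fintype β] [Fintype ν]
    [DecidableEq ι] [DecidableEq α] {a : ι × α → ℝ} {b : ι → β → ℝ} {w : ν → ℝ}
    (ha : Majorizes a w) (ha0 : ∀ x, 0 ≤ a x) (hb0 : ∀ i j, 0 ≤ b i j)
    (hb1 : ∀ i, ∑ j, b i j = 1) :
    Majorizes (fun x : ι × (α × β) => a (x.1, x.2.1) * b x.1 x.2.2) w :=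
  ha.of_fiberwise_sum_eq (fun x => (x.1, x.2.1)) (fun x => mul_nonneg (ha0 _) (hb0 _ _))
    fun y => by
      rw [Finset.sum_filter]
      simp [Fintype.sum_prod_type, Prod.ext_iff, ite_and, ← Finset.mul_sum, hb1]

end Majorization

lemma OrthonormalBasisVecs.conjTranspose_mul_self {d : ℕ} {x : Fin d → Fin d → ℂ}
    (hx : OrthonormalBasisVecs x) :
    (Matrix.of fun i j => x j i)ᴴ * Matrix.of (fun i j => x j i) = 1 := by
  ext i j
  simpa [Matrix.mul_apply, dotProduct, Matrix.one_apply] using hx i j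

lemma OrthonormalBasisVecs.sum_star_dotProduct_mulVec {d : ℕ} {x : Fin d → Fin d → ℂ}
    (hx : OrthonormalBasisVecs x) (A : Matrix (Fin d) (Fin d) ℂ) :
    ∑ j, star (x j) ⬝ᵥ (A *ᵥ x j) = A.trace := by
  set U : Matrix (Fin d) (Fin d) ℂ := Matrix.of fun i j => x j i
  calc ∑ j, star (x j) ⬝ᵥ (A *ᵥ x j) = (Uᴴ * A * U).trace := by
        simp only [U, Matrix.trace, Matrix.diag_apply, Matrix.mul_apply, dotProduct, mulVec,
          Matrix.conjTranspose_apply, Matrix.of_apply, Pi.star_apply, Finset.mul_sum,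
          mul_assoc]
    _ = A.trace := by
        rw [Matrix.trace_mul_cycle, mul_eq_one_comm.mp hx.conjTranspose_mul_self, Matrix.one_mul]

lemma IsDensityMatrix.sum_measDist {d : ℕ} {x : Fin d → Fin d → ℂ} (hx : OrthonormalBasisVecs x)
    {τ : Matrix (Fin d) (Fin d) ℂ} (hτ : IsDensityMatrix τ) : ∑ j, measDist x τ j = 1 := by
  rw [← Complex.one_re, ← hτ.2, ← hx.sum_star_dotProduct_mulVec, Complex.re_sum]
  rfl

lemma measDist_nonneg {d : ℕ} (x : Fin d → Fin d → ℂ) {σ : Matrix (Fin d) (Fin d) ℂ}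
    (hσ : σ.PosSemidef) (i : Fin d) : 0 ≤ measDist x σ i :=
  hσ.re_dotProduct_nonneg (x i)

section TensorProduct

variable {dA dB : ℕ}

lemma kronecker_mulVec_tensorVec (σ : Matrix (Fin dA) (Fin dA) ℂ)
    (τ : Matrix (Fin dB) (Fin dB) ℂ) (u : Fin dA → ℂ) (v : Fin dB → ℂ) :
    (σ ⊗ₖ τ) *ᵥ tensorVec u v = tensorVec (σ *ᵥ u) (τ *ᵥ v) := by
  ext ⟨i, j⟩
  simp only [mulVec, dotProduct, kroneckerMap_apply, tensorVec, Fintype.sum_prod_type,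
    Finset.sum_mul_sum]
  exact Finset.sum_congr rfl fun _ _ => Finset.sum_congr rfl fun _ _ => by ring

lemma star_tensorVec_dotProduct (u u' : Fin dA → ℂ) (v v' : Fin dB → ℂ) :
    star (tensorVec u v) ⬝ᵥ tensorVec u' v' = (star u ⬝ᵥ u') * (star v ⬝ᵥ v') := by
  simp only [dotProduct, tensorVec, Pi.star_apply, star_mul', Fintype.sum_prod_type,
    Finset.sum_mul_sum]
  exact Finset.sum_congr rfl fun _ _ => Finset.sum_congr rfl fun _ _ => by ring

lemma jointDist_kronecker (xA : Fin dA → Fin dA → ℂ) (xB : Fin dB → Fin dB → ℂ)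
    (σ : Matrix (Fin dA) (Fin dA) ℂ) {τ : Matrix (Fin dB) (Fin dB) ℂ} (hτ : τ.IsHermitian)
    (ij : Fin dA × Fin dB) :
    jointDist xA xB (σ ⊗ₖ τ) ij = measDist xA σ ij.1 * measDist xB τ ij.2 := by
  rw [jointDist, kronecker_mulVec_tensorVec, star_tensorVec_dotProduct, Complex.mul_re,
    show (star (xB ij.2) ⬝ᵥ τ *ᵥ xB ij.2).im = 0 from hτ.im_star_dotProduct_mulVec_self _,
    mul_zero, sub_zero]
  rfl

lemma jointDist_sum_smul (xA : Fin dA → Fin dA → ℂ) (xB : Fin dB → Fin dB → ℂ) {K : Type*}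
    [Fintype K] (lam : K → ℝ) (ρ : K → Matrix (Fin dA × Fin dB) (Fin dA × Fin dB) ℂ) :
    jointDist xA xB (∑ k, (lam k : ℂ) • ρ k) = ∑ k, lam k • jointDist xA xB (ρ k) := by
  ext ij
  simp only [jointDist, Matrix.sum_mulVec, dotProduct_sum, Matrix.smul_mulVec, dotProduct_smul,
    Complex.re_sum, smul_eq_mul, Complex.re_ofReal_mul, Finset.sum_apply, Pi.smul_apply]

end TensorProduct

theorem separable_many_observables_detection_general {dA dB L M : ℕ}
    (xA : Fin L → Fin dA → Fin dA → ℂ) (xB : Fin L → Fin dB → Fin dB → ℂ)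
    (hxB : ∀ l, OrthonormalBasisVecs (xB l))
    (ω : Fin M → ℝ)
    (hbound : ∀ σ : Matrix (Fin dA) (Fin dA) ℂ, IsDensityMatrix σ →
      Majorizes (fun li : Fin L × Fin dA => measDist (xA li.1) σ li.2) ω)
    (ρ : Matrix (Fin dA × Fin dB) (Fin dA × Fin dB) ℂ)
    (hsep : IsSeparableState ρ) :
    Majorizes (fun li : Fin L × (Fin dA × Fin dB) => jointDist (xA li.1) (xB li.1) ρ li.2)
      ω := by
  obtain ⟨K, lam, σ, τ, hlam0, hlam1, hσ, hτ, rfl⟩ := hsep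
  have hproduct : ∀ k, Majorizes (fun li : Fin L × (Fin dA × Fin dB) =>
      jointDist (xA li.1) (xB li.1) (σ k ⊗ₖ τ k) li.2) ω := fun k => by
    simp only [jointDist_kronecker _ _ _ (hτ k).1.isHermitian]
    exact (hbound (σ k) (hσ k)).mul_of_sum_eq_one (b := fun l => measDist (xB l) (τ k))
      (fun _ => measDist_nonneg _ (hσ k).1 _) (fun l => measDist_nonneg (xB l) (hτ k).1)
      fun l => (hτ k).sum_measDist (hxB l)
  convert Majorizes.sum_smul hlam0 hlam1 hproduct using 1
  ext li
  simp only [jointDist_sum_smul, Finset.sum_apply, Pi.smul_apply]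

/-- many observables: if `ω` is a nonnegative vector, summing to `L`, that
majorizes the direct sum `⊕_l p(x^{A,l}|σ_A)` for every density matrix `σ_A` on system `A`,
then for every separable bipartite density matrix `ρ`, `ω` also majorizes the direct sum of the
joint measurement distributions of `ρ` in the product bases `{x_i^{A,l} ⊗ x_j^{B,l}}`. -/
theorem separable_many_observables_detection {dA dB L M : ℕ}
    (xA : Fin L → Fin dA → Fin dA → ℂ) (xB : Fin L → Fin dB → Fin dB → ℂ)
    (hxA : ∀ l, OrthonormalBasisVecs (xA l)) (hxB : ∀ l, OrthonormalBasisVecs (xB l))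
    (ω : Fin M → ℝ) (hω0 : ∀ i, 0 ≤ ω i) (hωs : ∑ i, ω i = L)
    (hbound : ∀ σ : Matrix (Fin dA) (Fin dA) ℂ, IsDensityMatrix σ →
      Majorizes (fun li : Fin L × Fin dA => measDist (xA li.1) σ li.2) ω)
    (ρ : Matrix (Fin dA × Fin dB) (Fin dA × Fin dB) ℂ)
    (hρ : IsDensityMatrix ρ) (hsep : IsSeparableState ρ) :
    Majorizes (fun li : Fin L × (Fin dA × Fin dB) => jointDist (xA li.1) (xB li.1) ρ li.2)
      ω :=
  separable_many_observables_detection_general xA xB hxB ω hbound ρ hsep
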